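/- arXiv:1309.3104 — 2 statements merged into one kernel-verified Lean document; each statement's English description precedes it below -/
import Mathlib

section
/- Let q : [T₀, ∞) → ℝ² solve -q''(x) + ∇W(q(x)) = 0 with q(x) → a as x → ∞ and |q(x) - a| ≤ δ̄ for x ≥ T₀, where on the ball of radius 2δ̄ around a the Hessian satisfies ∇²W(ξ)η·η ≥ 2w|η|² for all η. Then |q(x) - a| ≤ δ̄ e^{-√(w/2)(x - T₀)} for all x ≥ T₀. -/
/-!
Convexity of `W` near `a` gives `⟪∇W(q) - ∇W(a), q - a⟫ ≥ 2w‖q - a‖²`, so `r = ‖q - a‖²`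
satisfies `r'' ≥ 4w r ≥ k² r` with `k = 2√(w/2)`. Then `g = r' + k r` satisfies `g' ≥ k g`
and vanishes at infinity, so `g ≤ 0`; that is, `e^{kx} r` is nonincreasing.
-/

open Real Filter Set Topology
open scoped RealInnerProductSpace

section StrongMonotone

variable {E : Type*} [NormedAddCommGroup E] [InnerProductSpace ℝ E]

theorem Convex.mul_norm_sub_sq_le_inner_sub {G : E → E} {G' : E → E →L[ℝ] E} {s : Set E}
    {c : ℝ} (hs : Convex ℝ s) (hG : ∀ x ∈ s, HasFDerivAt G (G' x) x)
    (hG' : ∀ x ∈ s, ∀ η, c * ‖η‖ ^ 2 ≤ ⟪G' x η, η⟫) {x y : E} (hx : x ∈ s) (hy : y ∈ s) :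
    c * ‖y - x‖ ^ 2 ≤ ⟪G y - G x, y - x⟫ := by
  set v := y - x
  set φ : ℝ → ℝ := fun t ↦ ⟪G (x + t • v), v⟫ - c * ‖v‖ ^ 2 * t
  have hφ : ∀ t ∈ Icc (0 : ℝ) 1, HasDerivAt φ (⟪G' (x + t • v) v, v⟫ - c * ‖v‖ ^ 2) t := by
    intro t ht
    have hline : HasDerivAt (fun t : ℝ ↦ x + t • v) v t := by
      simpa using ((hasDerivAt_id t).smul_const v).const_add x
    have hmem : x + t • v ∈ s := hs.add_smul_sub_mem hx hy ht
    exact (((hG _ hmem).comp_hasDerivAt t hline).inner ℝ (hasDerivAt_const t v)).sub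
      ((hasDerivAt_id t).const_mul (c * ‖v‖ ^ 2)) |>.congr_deriv (by simp)
  have hmono : MonotoneOn φ (Icc 0 1) := by
    refine monotoneOn_of_hasDerivWithinAt_nonneg (convex_Icc 0 1)
      (fun t ht ↦ (hφ t ht).continuousAt.continuousWithinAt)
      (fun t ht ↦ (hφ t (interior_subset ht)).hasDerivWithinAt) fun t ht ↦ ?_
    exact sub_nonneg.mpr (hG' _ (hs.add_smul_sub_mem hx hy (interior_subset ht)) v)
  have h01 := hmono (left_mem_Icc.mpr zero_le_one) (right_mem_Icc.mpr zero_le_one) zero_le_one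
  simp only [φ, v, zero_smul, one_smul, add_zero, add_sub_cancel, mul_zero, mul_one,
    sub_zero] at h01
  rw [inner_sub_left]
  linarith

end StrongMonotone

section DifferentialInequalities

variable {f f' : ℝ → ℝ} {k T : ℝ}

theorem monotoneOn_exp_neg_mul_mul_of_mul_le_deriv (hf : ∀ x ≥ T, HasDerivAt f (f' x) x)
    (h : ∀ x ≥ T, k * f x ≤ f' x) : MonotoneOn (fun x ↦ exp (-k * x) * f x) (Ici T) := by
  have hd : ∀ x ≥ T, HasDerivAt (fun x ↦ exp (-k * x) * f x)
      (exp (-k * x) * (f' x - k * f x)) x := by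
    intro x hx
    exact (((hasDerivAt_id x).const_mul (-k)).exp.mul (hf x hx)).congr_deriv
      (by simp only [id, mul_one]; ring)
  refine monotoneOn_of_hasDerivWithinAt_nonneg (convex_Ici T)
    (fun x hx ↦ (hd x hx).continuousAt.continuousWithinAt)
    (fun x hx ↦ (hd x (interior_subset hx)).hasDerivWithinAt) fun x hx ↦ ?_
  exact mul_nonneg (exp_pos _).le (sub_nonneg.mpr (h x (interior_subset hx)))

theorem antitoneOn_exp_neg_mul_mul_of_deriv_le_mul (hf : ∀ x ≥ T, HasDerivAt f (f' x) x)
    (h : ∀ x ≥ T, f' x ≤ k * f x) : AntitoneOn (fun x ↦ exp (-k * x) * f x) (Ici T) := by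
  have := (monotoneOn_exp_neg_mul_mul_of_mul_le_deriv (f := -f) (fun x hx ↦ (hf x hx).neg)
    fun x hx ↦ by simpa using h x hx).neg
  convert this using 2 with x
  simp

theorem nonpos_of_mul_le_deriv_of_tendsto_zero (hk : 0 ≤ k)
    (hf : ∀ x ≥ T, HasDerivAt f (f' x) x) (h : ∀ x ≥ T, k * f x ≤ f' x)
    (hlim : Tendsto f atTop (𝓝 0)) : ∀ x ≥ T, f x ≤ 0 := by
  intro x₀ hx₀
  by_contra! hpos
  have hmono := monotoneOn_exp_neg_mul_mul_of_mul_le_deriv (T := x₀)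
    (fun x hx ↦ hf x (hx₀.trans hx)) fun x hx ↦ h x (hx₀.trans hx)
  obtain ⟨x, hx, hlt⟩ :=
    ((eventually_ge_atTop x₀).and (hlim.eventually (gt_mem_nhds hpos))).exists
  have hle := hmono self_mem_Ici hx hx
  have hexp : exp (-k * x) ≤ exp (-k * x₀) := exp_le_exp.mpr (by nlinarith)
  nlinarith [exp_pos (-k * x), exp_pos (-k * x₀)]

theorem le_mul_exp_of_sq_mul_le_deriv2 {r r' r'' : ℝ → ℝ} (hk : 0 ≤ k)
    (hr : ∀ x ≥ T, HasDerivAt r (r' x) x) (hr' : ∀ x ≥ T, HasDerivAt r' (r'' x) x)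
    (h : ∀ x ≥ T, k ^ 2 * r x ≤ r'' x) (hr0 : Tendsto r atTop (𝓝 0))
    (hr'0 : Tendsto r' atTop (𝓝 0)) : ∀ x ≥ T, r x ≤ r T * exp (-k * (x - T)) := by
  have hg : ∀ x ≥ T, r' x + k * r x ≤ 0 := by
    refine nonpos_of_mul_le_deriv_of_tendsto_zero hk
      (fun x hx ↦ (hr' x hx).add ((hr x hx).const_mul k)) (fun x hx ↦ ?_) ?_
    · nlinarith [h x hx]
    · simpa using hr'0.add (hr0.const_mul k)
  have hanti := antitoneOn_exp_neg_mul_mul_of_deriv_le_mul (k := -k) hr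
    fun x hx ↦ by linarith [hg x hx]
  intro x hx
  have hle : exp (k * x) * r x ≤ exp (k * T) * r T := by
    simpa only [neg_neg] using hanti self_mem_Ici hx hx
  have hsplit : exp (k * T) = exp (k * x) * exp (-k * (x - T)) := by
    rw [← exp_add]; ring_nf
  rw [hsplit, mul_assoc, mul_comm (exp (-k * (x - T)))] at hle
  exact le_of_mul_le_mul_left hle (exp_pos _)

end DifferentialInequalities

theorem stmt_3_general
    (gradW : EuclideanSpace ℝ (Fin 2) → EuclideanSpace ℝ (Fin 2))
    (HW : EuclideanSpace ℝ (Fin 2) →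
      (EuclideanSpace ℝ (Fin 2)) →L[ℝ] (EuclideanSpace ℝ (Fin 2)))
    (a : EuclideanSpace ℝ (Fin 2)) (δ w T₀ : ℝ) (hw : 0 < w)
    (hgrada : gradW a = 0)
    (hHW : ∀ ξ, HasFDerivAt gradW (HW ξ) ξ)
    (hhess : ∀ ξ, ‖ξ - a‖ ≤ 2 * δ → ∀ η : EuclideanSpace ℝ (Fin 2),
      (inner ℝ (HW ξ η) η : ℝ) ≥ 2 * w * ‖η‖ ^ 2)
    (q q' : ℝ → EuclideanSpace ℝ (Fin 2))
    (hq1 : ∀ x, HasDerivAt q (q' x) x)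
    (hq2 : ∀ x, HasDerivAt q' (gradW (q x)) x)
    (hbd : ∀ x ≥ T₀, ‖q x - a‖ ≤ δ)
    (hlimq : Tendsto q atTop (nhds a))
    (hlimq' : Tendsto q' atTop (nhds 0)) :
    ∀ x ≥ T₀, ‖q x - a‖ ≤ δ * Real.exp (-Real.sqrt (w / 2) * (x - T₀)) := by
  set μ := √(w / 2)
  have hδ : 0 ≤ δ := (norm_nonneg _).trans (hbd T₀ le_rfl)
  have hμ : (2 * μ) ^ 2 = 2 * w := by rw [mul_pow, sq_sqrt (by positivity)]; ring
  have hconv : ∀ x ≥ T₀, 2 * w * ‖q x - a‖ ^ 2 ≤ ⟪q x - a, gradW (q x)⟫ := by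
    intro x hx
    have := (convex_closedBall a (2 * δ)).mul_norm_sub_sq_le_inner_sub (fun ξ _ ↦ hHW ξ)
      (fun ξ hξ ↦ hhess ξ (by rwa [← dist_eq_norm])) (Metric.mem_closedBall_self (by linarith))
      (by rw [Metric.mem_closedBall, dist_eq_norm]; linarith [hbd x hx])
    rwa [hgrada, sub_zero, real_inner_comm] at this
  have hqa : Tendsto (fun x ↦ q x - a) atTop (𝓝 0) := tendsto_sub_nhds_zero_iff.mpr hlimq
  have hdecay := le_mul_exp_of_sq_mul_le_deriv2 (r := fun x ↦ ‖q x - a‖ ^ 2)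
    (r' := fun x ↦ 2 * ⟪q x - a, q' x⟫) (T := T₀)
    (by positivity : 0 ≤ 2 * μ) (fun x _ ↦ ((hq1 x).sub_const a).norm_sq)
    (fun x _ ↦ ((((hq1 x).sub_const a).inner ℝ (hq2 x)).const_mul 2))
    (fun x hx ↦ by nlinarith [hconv x hx, real_inner_self_nonneg (x := q' x)])
    (by simpa using hqa.norm.pow 2)
    (by simpa using (hqa.inner (𝕜 := ℝ) hlimq').const_mul (2 : ℝ))
  intro x hx
  refine (pow_le_pow_iff_left₀ (norm_nonneg _) (by positivity) two_ne_zero).mp ?_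
  calc ‖q x - a‖ ^ 2 ≤ ‖q T₀ - a‖ ^ 2 * exp (-(2 * μ) * (x - T₀)) := hdecay x hx
    _ ≤ δ ^ 2 * exp (-(2 * μ) * (x - T₀)) := by gcongr; exact hbd T₀ le_rfl
    _ = (δ * exp (-μ * (x - T₀))) ^ 2 := by rw [mul_pow, ← exp_nat_mul]; ring_nf

/-- exponential decay of heteroclinic solutions towards the
nondegenerate minimum `a` of the potential. -/
theorem stmt_3 (W : EuclideanSpace ℝ (Fin 2) → ℝ)
    (gradW : EuclideanSpace ℝ (Fin 2) → EuclideanSpace ℝ (Fin 2))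
    (HW : EuclideanSpace ℝ (Fin 2) →
      (EuclideanSpace ℝ (Fin 2)) →L[ℝ] (EuclideanSpace ℝ (Fin 2)))
    (a : EuclideanSpace ℝ (Fin 2)) (δ w T₀ : ℝ) (hδ : 0 < δ) (hw : 0 < w)
    (hWC : ContDiff ℝ 3 W) (hWa : W a = 0) (hgrada : gradW a = 0)
    (hgrad : ∀ ξ, HasGradientAt W (gradW ξ) ξ)
    (hHW : ∀ ξ, HasFDerivAt gradW (HW ξ) ξ)
    (hhess : ∀ ξ, ‖ξ - a‖ ≤ 2 * δ → ∀ η : EuclideanSpace ℝ (Fin 2),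
      (inner ℝ (HW ξ η) η : ℝ) ≥ 2 * w * ‖η‖ ^ 2)
    (q q' : ℝ → EuclideanSpace ℝ (Fin 2))
    (hq1 : ∀ x, HasDerivAt q (q' x) x)
    (hq2 : ∀ x, HasDerivAt q' (gradW (q x)) x)
    (hbd : ∀ x ≥ T₀, ‖q x - a‖ ≤ δ)
    (hlimq : Tendsto q atTop (nhds a))
    (hlimq' : Tendsto q' atTop (nhds 0)) :
    ∀ x ≥ T₀, ‖q x - a‖ ≤ δ * Real.exp (-Real.sqrt (w / 2) * (x - T₀)) :=
  stmt_3_general gradW HW a δ w T₀ hw hgrada hHW hhess q q' hq1 hq2 hbd hlimq hlimq'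
end

section
/- Let v : ℝ → L²(ℝ)² be weakly differentiable with ‖v(y₁) - v(y₀)‖_{L²} ≤ √(2 E |y₁ - y₀|) for all y₀ < y₁ (with E the renormalized energy), and suppose there is a finite set ℳ₁ and ν_d > 0 for each d > 0 such that d_{L²}(v(y), ℳ₁) ≥ d implies the slice energy exceeds m₁ + ν_d. If the total renormalized energy ∫_ℝ (½‖v'(y)‖²_{L²} + e(y)) dy is finite, where e(y) ≥ 0 and e(y) ≥ ν_d whenever d_{L²}(v(y),ℳ₁) ≥ d, then there exists q ∈ ℳ₁ such that ‖v(y) - q‖_{L²} → 0 as y → +∞. -/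
open Filter MeasureTheory Set Metric

/-!
Finite energy makes the tails `∫_{[R,∞)} E` small. Through the path estimate this means `v`
hardly moves on unit intervals far out, and through coercivity that every far unit interval
contains a point where `v` is close to `ℳ₁`; together, `d(v(y), ℳ₁) → 0`. As the points of `ℳ₁`
are `5d₀` apart while `v` moves by less than `d₀` in unit time, the point of `ℳ₁` closest to
`v(y)` is eventually constant.
-/

theorem Real.forall_ge_of_forall_Icc_add_one {P : ℝ → Prop} {R : ℝ} (hR : P R)
    (hstep : ∀ y ≥ R, P y → ∀ y' ∈ Icc y (y + 1), P y') : ∀ y ≥ R, P y := by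
  have hnat : ∀ n : ℕ, P (R + n) := by
    intro n
    induction n with
    | zero => simpa using hR
    | succ n ih =>
      refine hstep _ (by simp) ih _ ⟨by push_cast; linarith, by push_cast; linarith⟩
  intro y hy
  have hfloor : (⌊y - R⌋₊ : ℝ) ≤ y - R := Nat.floor_le (by linarith)
  exact hstep _ (by simp) (hnat ⌊y - R⌋₊) y
    ⟨by linarith, by linarith [Nat.lt_floor_add_one (y - R)]⟩

theorem eventually_forall_subset_Ici_setIntegral_lt {E : ℝ → ℝ} (hE0 : ∀ y, 0 ≤ E y)
    (hE : Integrable E) {c : ℝ} (hc : 0 < c) :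
    ∀ᶠ R in atTop, ∀ s ⊆ Ici R, ∫ y in s, E y < c := by
  filter_upwards [(tendsto_integral_Ici_zero (f := E) tendsto_id).eventually (gt_mem_nhds hc)]
    with R hR s hs
  exact (setIntegral_mono_set hE.integrableOn (Eventually.of_forall hE0)
    hs.eventuallyLE).trans_lt hR

theorem eventually_forall_Icc_dist_lt_of_sq_norm_sub_le {F : Type*}
    [SeminormedAddCommGroup F] {v : ℝ → F} {E : ℝ → ℝ} (hE0 : ∀ y, 0 ≤ E y)
    (hE : Integrable E)
    (hpath : ∀ y₀ y₁ : ℝ, y₀ ≤ y₁ →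
      ‖v y₁ - v y₀‖ ^ 2 ≤ 2 * (∫ y in y₀..y₁, E y) * (y₁ - y₀))
    {δ : ℝ} (hδ : 0 < δ) :
    ∀ᶠ y in atTop, ∀ y' ∈ Icc y (y + 1), dist (v y') (v y) < δ := by
  filter_upwards [eventually_forall_subset_Ici_setIntegral_lt hE0 hE (half_pos (pow_pos hδ 2))]
    with y hy y' hy'
  have hI : ∫ t in y..y', E t < δ ^ 2 / 2 := by
    rw [intervalIntegral.integral_of_le hy'.1]
    exact hy _ (Ioc_subset_Ioi_self.trans Ioi_subset_Ici_self)
  have hI0 : 0 ≤ ∫ t in y..y', E t := intervalIntegral.integral_nonneg hy'.1 fun t _ => hE0 t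
  refine lt_of_pow_lt_pow_left₀ 2 hδ.le ?_
  calc dist (v y') (v y) ^ 2 ≤ 2 * (∫ t in y..y', E t) * (y' - y) := by
        rw [dist_eq_norm]; exact hpath y y' hy'.1
    _ ≤ 2 * (∫ t in y..y', E t) := by nlinarith [hy'.2]
    _ < δ ^ 2 := by linarith

theorem tendsto_infDist_zero_of_coercive {X : Type*} [PseudoMetricSpace X] {f : ℝ → X}
    {M : Set X} {E : ℝ → ℝ} (hE0 : ∀ y, 0 ≤ E y) (hE : Integrable E) {D : ℝ} (hD : 0 < D)
    (hcoerc : ∀ d : ℝ, 0 < d → d < D → ∃ ν > 0, ∀ y : ℝ, d ≤ infDist (f y) M → ν ≤ E y)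
    (hosc : ∀ δ > 0, ∀ᶠ y in atTop, ∀ y' ∈ Icc y (y + 1), dist (f y') (f y) < δ) :
    Tendsto (fun y => infDist (f y) M) atTop (nhds 0) := by
  refine tendsto_order.2 ⟨fun a ha => Eventually.of_forall fun y => ha.trans_le infDist_nonneg,
    fun ε hε => ?_⟩
  set d := min (ε / 2) (D / 2)
  have hd : 0 < d := lt_min (half_pos hε) (half_pos hD)
  obtain ⟨ν, hν, hνE⟩ := hcoerc d hd ((min_le_right _ _).trans_lt (half_lt_self hD))
  obtain ⟨R, hR⟩ := eventually_atTop.1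
    ((eventually_forall_subset_Ici_setIntegral_lt hE0 hE hν).and (hosc d hd))
  filter_upwards [eventually_ge_atTop (R + 1)] with y hy
  -- `E` is somewhere below its mean over `[y - 1, y]`, hence below `ν`, and there `f` is near `M`.
  obtain ⟨t, ht, hEt⟩ := exists_le_setAverage (f := E) (s := Icc (y - 1) y) (μ := volume)
    (by simp) (by simp) hE.integrableOn
  have hmean : ⨍ s in Icc (y - 1) y, E s < ν := by
    rw [setAverage_eq, measureReal_def, Real.volume_Icc]
    simpa using (hR (y - 1) (by linarith)).1 _ Icc_subset_Ici_self
  have hnear : infDist (f t) M < d := not_le.1 fun h => (hEt.trans_lt hmean).not_ge (hνE t h)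
  have hmove : dist (f y) (f t) < d := (hR t (by linarith [ht.1])).2 y ⟨ht.2, by linarith [ht.1]⟩
  calc infDist (f y) M ≤ infDist (f t) M + dist (f y) (f t) := infDist_le_infDist_add_dist
    _ < d + d := add_lt_add hnear hmove
    _ ≤ ε := by linarith [min_le_left (ε / 2) (D / 2)]

theorem exists_tendsto_of_tendsto_infDist_zero {X : Type*} [PseudoMetricSpace X] {f : ℝ → X}
    {M : Set X} {δ : ℝ} (hδ : 0 < δ) (hM : M.Nonempty)
    (hsep : ∀ p ∈ M, ∀ q ∈ M, p ≠ q → 3 * δ ≤ dist p q)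
    (hinf : Tendsto (fun y => infDist (f y) M) atTop (nhds 0))
    (hosc : ∀ᶠ y in atTop, ∀ y' ∈ Icc y (y + 1), dist (f y') (f y) < δ) :
    ∃ q ∈ M, Tendsto f atTop (nhds q) := by
  have hnear : ∀ ε > 0, ∀ᶠ y in atTop, ∃ p ∈ M, dist (f y) p < ε := fun ε hε =>
    (hinf.eventually (gt_mem_nhds hε)).mono fun y hy => (infDist_lt_iff hM).1 hy
  have hunique : ∀ x, ∀ p ∈ M, ∀ q ∈ M, dist x p < δ → dist x q < 2 * δ → p = q := by
    intro x p hp q hq hxp hxq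
    by_contra hpq
    linarith [hsep p hp q hq hpq, dist_triangle_left p q x]
  obtain ⟨R, hR⟩ := eventually_atTop.1 ((hnear δ hδ).and hosc)
  obtain ⟨q, hq, hRq⟩ := (hR R le_rfl).1
  have hstay : ∀ y ≥ R, dist (f y) q < δ := by
    refine Real.forall_ge_of_forall_Icc_add_one hRq fun y hy hyq y' hy' => ?_
    obtain ⟨p, hp, hy'p⟩ := (hR y' (hy.trans hy'.1)).1
    have hy'q : dist (f y') q < 2 * δ := by
      linarith [dist_triangle (f y') (f y) q, (hR y hy).2 y' hy']
    exact hunique _ p hp q hq hy'p hy'q ▸ hy'p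
  refine ⟨q, hq, Metric.tendsto_nhds.2 fun ε hε => ?_⟩
  filter_upwards [hnear (min ε δ) (lt_min hε hδ), eventually_ge_atTop R] with y ⟨p, hp, hyp⟩ hy
  have hpq := hunique _ p hp q hq (hyp.trans_le (min_le_right _ _)) (by linarith [hstay y hy])
  exact hpq ▸ hyp.trans_le (min_le_left _ _)

theorem stmt_10_general (v : ℝ → Lp (ℝ × ℝ) 2 (volume : Measure ℝ))
    (M : Set (Lp (ℝ × ℝ) 2 (volume : Measure ℝ)))
    (d₀ : ℝ) (hd₀ : 0 < d₀) (hMne : M.Nonempty)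
    (hsep : ∀ p ∈ M, ∀ q ∈ M, p ≠ q → 5 * d₀ ≤ dist p q)
    (E : ℝ → ℝ) (hEnonneg : ∀ y, 0 ≤ E y) (hEint : Integrable E)
    (hpath : ∀ y₀ y₁ : ℝ, y₀ ≤ y₁ →
      ‖v y₁ - v y₀‖ ^ 2 ≤ 2 * (∫ y in y₀..y₁, E y) * (y₁ - y₀))
    (hcoerc : ∀ d : ℝ, 0 < d → d < 2 * d₀ →
      ∃ ν > 0, ∀ y : ℝ, d ≤ Metric.infDist (v y) M → ν ≤ E y) :
    ∃ q ∈ M, Tendsto (fun y => ‖v y - q‖) atTop (nhds 0) := by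
  have hosc : ∀ δ > 0, ∀ᶠ y in atTop, ∀ y' ∈ Icc y (y + 1), dist (v y') (v y) < δ :=
    fun δ hδ => eventually_forall_Icc_dist_lt_of_sq_norm_sub_le hEnonneg hEint hpath hδ
  have hinf := tendsto_infDist_zero_of_coercive hEnonneg hEint (by linarith) hcoerc hosc
  obtain ⟨q, hq, hlim⟩ := exists_tendsto_of_tendsto_infDist_zero hd₀ hMne
    (fun p hp q hq hpq => by linarith [hsep p hp q hq hpq]) hinf (hosc d₀ hd₀)
  exact ⟨q, hq, tendsto_iff_norm_sub_tendsto_zero.1 hlim⟩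

/-- a finite-energy trajectory `v` with values in `L²(ℝ)²`
converges as `y → +∞` to some element of the finite set `M`.  Here `E y` is the
renormalized slice energy `½‖v'(y)‖² + e(y)`. -/
theorem stmt_10 (v : ℝ → Lp (ℝ × ℝ) 2 (volume : Measure ℝ))
    (M : Set (Lp (ℝ × ℝ) 2 (volume : Measure ℝ)))
    (d₀ : ℝ) (hd₀ : 0 < d₀) (hMfin : M.Finite) (hMne : M.Nonempty)
    (hsep : ∀ p ∈ M, ∀ q ∈ M, p ≠ q → 5 * d₀ ≤ dist p q)
    (E : ℝ → ℝ) (hEnonneg : ∀ y, 0 ≤ E y) (hEint : Integrable E)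
    (hpath : ∀ y₀ y₁ : ℝ, y₀ ≤ y₁ →
      ‖v y₁ - v y₀‖ ^ 2 ≤ 2 * (∫ y in y₀..y₁, E y) * (y₁ - y₀))
    (hcoerc : ∀ d : ℝ, 0 < d → d < 2 * d₀ →
      ∃ ν > 0, ∀ y : ℝ, d ≤ Metric.infDist (v y) M → ν ≤ E y) :
    ∃ q ∈ M, Tendsto (fun y => ‖v y - q‖) atTop (nhds 0) :=
  stmt_10_general v M d₀ hd₀ hMne hsep E hEnonneg hEint hpath hcoerc
end
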